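/- In the quadratic space ℚ³⁰ with bilinear form given by the intersection matrix M of the curves E_{ij}^β (diagonal −3; entry 1 when the index pairs are disjoint; 0 otherwise), fix indices 1 ≤ j < r < s < t ≤ 5 and let D = B_{jr} + B_{st}, where B_{ab} = Σ_{β} v_{ab}^β is the sum of the three basis vectors with index pair {a,b}. Then ⟨D, D⟩ = 0 and ⟨Σ, D⟩ = 36 where Σ is the sum of all 30 basis vectors; consequently, taking K = Σ/2, the arithmetic genus 1 + (D² + K·D)/2 equals 10. -/

import Mathlib

/-!
By bilinearity everything reduces to entries of `M`. The three curves over one pair are disjoint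
`(-3)`-curves, so `B_{ab}² = -9`, while over disjoint pairs all nine entries are `1`, so
`B_{jr}·B_{st} = 9`; hence `D² = -9 - 9 + 2·9 = 0`. Each pair in `{1,…,5}` is disjoint from exactly
three others, so every column of `M` sums to `-3 + 9 = 6`, giving `Σ·B_{ab} = 18`, `Σ·D = 36`
and genus `1 + (0 + 18)/2 = 10`.
-/

open Finset

/-- Index set for the 30 elliptic curves `E_{ij}^β`: a pair `i < j` in `Fin 5`
together with `β ∈ μ₃` encoded as `ZMod 3`. -/
abbrev Idx : Type := {p : Fin 5 × Fin 5 // p.1 < p.2} × ZMod 3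

/-- The 30×30 intersection matrix of the curves `E_{ij}^β`: `−3` on the diagonal,
`1` between indices with disjoint pairs `{i,j} ∩ {s,t} = ∅`, and `0` otherwise. -/
def M : Matrix Idx Idx ℚ := fun x y =>
  if x = y then -3
  else if x.1.1.1 ≠ y.1.1.1 ∧ x.1.1.1 ≠ y.1.1.2 ∧ x.1.1.2 ≠ y.1.1.1 ∧ x.1.1.2 ≠ y.1.1.2
  then 1 else 0

/-- The pairing given by the intersection matrix `M`. -/
def pair (x y : Idx → ℚ) : ℚ := dotProduct x (M.mulVec y)

/-- `B_{ij} = v_{ij}^0 + v_{ij}^1 + v_{ij}^2`. -/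
def B (i j : Fin 5) (h : i < j) : Idx → ℚ := ∑ β : ZMod 3, Pi.single (⟨⟨(i, j), h⟩, β⟩ : Idx) (1 : ℚ)

/-- The sum `Σ` of all 30 basis vectors. -/
def Sig : Idx → ℚ := ∑ x : Idx, Pi.single x 1

abbrev PairsDisjoint (x y : Idx) : Prop :=
  x.1.1.1 ≠ y.1.1.1 ∧ x.1.1.1 ≠ y.1.1.2 ∧ x.1.1.2 ≠ y.1.1.1 ∧ x.1.1.2 ≠ y.1.1.2

lemma M_apply (x y : Idx) :
    M x y = (if x = y then -3 else 0) + if PairsDisjoint x y then 1 else 0 := by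
  unfold M
  split_ifs <;> simp_all [PairsDisjoint]

lemma card_pairsDisjoint (y : Idx) : #{x | PairsDisjoint x y} = 9 := by
  revert y; decide

lemma sum_M_col (y : Idx) : ∑ x, M x y = 6 := by
  simp only [M_apply, sum_add_distrib, sum_ite_eq', mem_univ, if_true, sum_boole,
    card_pairsDisjoint]
  norm_num

lemma pair_eq_toBilin' (x y : Idx → ℚ) : pair x y = Matrix.toBilin' M x y :=
  (Matrix.toBilin'_apply' M x y).symm

lemma pair_add_left (x y z : Idx → ℚ) : pair (x + y) z = pair x z + pair y z := by
  simp only [pair_eq_toBilin', map_add, LinearMap.add_apply]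

lemma pair_add_right (x y z : Idx → ℚ) : pair x (y + z) = pair x y + pair x z := by
  simp only [pair_eq_toBilin', map_add]

lemma pair_smul_left (c : ℚ) (x y : Idx → ℚ) : pair (c • x) y = c * pair x y := by
  simp only [pair_eq_toBilin', LinearMap.map_smul₂, smul_eq_mul]

lemma pair_sum_single {α β : Type*} (s : Finset α) (t : Finset β) (f : α → Idx) (g : β → Idx) :
    pair (∑ a ∈ s, Pi.single (f a) 1) (∑ b ∈ t, Pi.single (g b) 1) =
      ∑ a ∈ s, ∑ b ∈ t, M (f a) (g b) := by
  simp only [pair_eq_toBilin', map_sum, LinearMap.sum_apply, Matrix.toBilin'_single]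
  exact sum_comm

lemma pair_B_self (i j : Fin 5) (h : i < j) : pair (B i j h) (B i j h) = -9 := by
  norm_num [B, pair_sum_single, M_apply, PairsDisjoint]

lemma pair_B_of_disjoint {a b c d : Fin 5} (h : a < b) (h' : c < d)
    (hac : a ≠ c) (had : a ≠ d) (hbc : b ≠ c) (hbd : b ≠ d) :
    pair (B a b h) (B c d h') = 9 := by
  norm_num [B, pair_sum_single, M, Prod.ext_iff, Subtype.ext_iff, hac, had, hbc, hbd]

lemma pair_Sig_B (i j : Fin 5) (h : i < j) : pair Sig (B i j h) = 18 := by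
  rw [Sig, B, pair_sum_single, sum_comm]
  simp only [sum_M_col, sum_const, card_univ, ZMod.card, nsmul_eq_mul]
  norm_num

/-- For `j < r < s < t` and `D = B_{jr} + B_{st}`: `⟨D,D⟩ = 0`, `⟨Σ,D⟩ = 36`, and with
`K = Σ/2` the arithmetic genus `1 + (D² + K·D)/2` equals `10`. -/
theorem stmt_11 (j r s t : Fin 5) (h1 : j < r) (h2 : r < s) (h3 : s < t) :
    let D : Idx → ℚ := B j r h1 + B s t h3
    pair D D = 0 ∧ pair Sig D = 36 ∧
      1 + (pair D D + pair ((2 : ℚ)⁻¹ • Sig) D) / 2 = 10 := by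
  intro D
  have hjs : j ≠ s := (h1.trans h2).ne
  have hjt : j ≠ t := (h1.trans (h2.trans h3)).ne
  have hrs : r ≠ s := h2.ne
  have hrt : r ≠ t := (h2.trans h3).ne
  have hDD : pair D D = 0 := by
    simp only [D, pair_add_left, pair_add_right, pair_B_self,
      pair_B_of_disjoint h1 h3 hjs hjt hrs hrt,
      pair_B_of_disjoint h3 h1 hjs.symm hrs.symm hjt.symm hrt.symm]
    norm_num
  have hSD : pair Sig D = 36 := by
    simp only [D, pair_add_right, pair_Sig_B]
    norm_num
  refine ⟨hDD, hSD, ?_⟩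
  rw [hDD, pair_smul_left, hSD]
  norm_num
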